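/- Error recursion (Proposition): Define E_j := || sup_{z∈L} |Ĉ_j(z,·) − C*_j(z,·)| ||_{L²(μ_j ⊗ P_M)} for j = 0,...,J−1, with E_J = 0. Assume the empirical projection satisfies, for each z, ||Ĉ_j(z,·) − C̃_j(z,·)||_{L²(μ_j⊗P_M)} ≤ ε_{j,M} + √2 · inf_{w∈Ψ_j} ||C̃_j(z,·) − w||_{L²(μ_j⊗P_M)}, and the one-step propagation inequality of the previous lemma holds. Then E_j ≤ |L|·( ε_{j,M} + √2 · sup_{z∈L} inf_{w∈Ψ_j} ||C̃_j(z,·) − w||_{L²(μ_j⊗P_M)} ) + |L|·E_{j+1}. -/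

import Mathlib

/-
For each control `z`, the triangle inequality in `L²` splits `‖Ĉ_j(z) − C*_j(z)‖` into the
projection error `‖Ĉ_j(z) − C̃_j(z)‖ ≤ ε_j + √2·sup_z inf_{w∈Ψ_j} ‖C̃_j(z) − w‖` and the
propagated error `‖C̃_j(z) − C*_j(z)‖ ≤ ‖sup_z |C̃_j − C*_j|‖ ≤ E_{j+1}`. Bounding the pointwise
supremum over the finite set `L` by the sum over `L` costs the factor `|L|`; the same bound keeps
the `L²` norm of the supremum finite, which its real-valued truncation `toReal` requires.
-/

open MeasureTheory

/-- The `L²(ν)`-norm of a real function. -/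
noncomputable def l2norm {α : Type*} [MeasurableSpace α] (ν : Measure α) (f : α → ℝ) : ℝ :=
  (eLpNorm f 2 ν).toReal

/-- `E_j := ‖ sup_{z∈L} |Ĉ_j(z,·) − C*_j(z,·)| ‖_{L²(μ_j ⊗ P_M)}` for `j < J`, and `E_J = 0`
by definition. -/
noncomputable def errSeq {α L : Type*} [MeasurableSpace α] [Fintype L]
    (J : ℕ) (ν : ℕ → Measure α) (Chat Cstar : ℕ → L → α → ℝ) (j : ℕ) : ℝ :=
  if j < J then l2norm (ν j) (fun x => ⨆ z : L, |Chat j z x - Cstar j z x|) else 0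

open scoped ENNReal

section L2Norm

variable {α ι : Type*} [MeasurableSpace α] [Fintype ι] {μ : Measure α}

lemma iSup_abs_le_sum_abs (g : ι → ℝ) : ⨆ i, |g i| ≤ ∑ i, |g i| :=
  Real.iSup_le (fun i => Finset.single_le_sum (fun i _ => abs_nonneg (g i)) (Finset.mem_univ i))
    (Finset.sum_nonneg fun i _ => abs_nonneg (g i))

lemma eLpNorm_iSup_abs_le_sum {p : ℝ≥0∞} {f : ι → α → ℝ}
    (hf : ∀ i, AEStronglyMeasurable (f i) μ) (hp : 1 ≤ p) :
    eLpNorm (fun x => ⨆ i, |f i x|) p μ ≤ ∑ i, eLpNorm (f i) p μ :=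
  calc eLpNorm (fun x => ⨆ i, |f i x|) p μ ≤ eLpNorm (∑ i, fun x => |f i x|) p μ := by
        refine eLpNorm_mono_real fun x => ?_
        rw [Real.norm_eq_abs, abs_of_nonneg (Real.iSup_nonneg fun i => abs_nonneg _),
          Finset.sum_apply]
        exact iSup_abs_le_sum_abs fun i => f i x
    _ ≤ ∑ i, eLpNorm (fun x => |f i x|) p μ :=
        eLpNorm_sum_le (fun i _ => (hf i).norm) hp
    _ = ∑ i, eLpNorm (f i) p μ := by
        simp only [← Real.norm_eq_abs, eLpNorm_norm]

lemma eLpNorm_iSup_abs_ne_top {p : ℝ≥0∞} {f : ι → α → ℝ} (hf : ∀ i, MemLp (f i) p μ)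
    (hp : 1 ≤ p) : eLpNorm (fun x => ⨆ i, |f i x|) p μ ≠ ⊤ :=
  ne_top_of_le_ne_top (ENNReal.sum_ne_top.2 fun i _ => (hf i).eLpNorm_ne_top)
    (eLpNorm_iSup_abs_le_sum (fun i => (hf i).1) hp)

lemma l2norm_iSup_abs_le_sum {f : ι → α → ℝ} (hf : ∀ i, MemLp (f i) 2 μ) :
    l2norm μ (fun x => ⨆ i, |f i x|) ≤ ∑ i, l2norm μ (f i) := by
  have hfin : ∀ i ∈ Finset.univ, eLpNorm (f i) 2 μ ≠ ⊤ := fun i _ => (hf i).eLpNorm_ne_top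
  unfold l2norm
  rw [← ENNReal.toReal_sum hfin]
  exact ENNReal.toReal_mono (ENNReal.sum_ne_top.2 hfin)
    (eLpNorm_iSup_abs_le_sum (fun i => (hf i).1) one_le_two)

lemma l2norm_le_l2norm_iSup_abs {f : ι → α → ℝ} (hf : ∀ i, MemLp (f i) 2 μ) (i : ι) :
    l2norm μ (f i) ≤ l2norm μ (fun x => ⨆ i, |f i x|) := by
  refine ENNReal.toReal_mono (eLpNorm_iSup_abs_ne_top hf one_le_two)
    (eLpNorm_mono_real fun x => ?_)
  rw [Real.norm_eq_abs]
  exact Finite.le_ciSup (fun i => |f i x|) i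

lemma l2norm_add_le {f g : α → ℝ} (hf : MemLp f 2 μ) (hg : MemLp g 2 μ) :
    l2norm μ (f + g) ≤ l2norm μ f + l2norm μ g := by
  unfold l2norm
  rw [← ENNReal.toReal_add hf.eLpNorm_ne_top hg.eLpNorm_ne_top]
  exact ENNReal.toReal_mono (ENNReal.add_ne_top.2 ⟨hf.eLpNorm_ne_top, hg.eLpNorm_ne_top⟩)
    (eLpNorm_add_le hf.1 hg.1 one_le_two)

lemma l2norm_sub_le_add {f g h : α → ℝ} (hf : MemLp f 2 μ) (hg : MemLp g 2 μ)
    (hh : MemLp h 2 μ) :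
    l2norm μ (fun x => f x - h x) ≤
      l2norm μ (fun x => f x - g x) + l2norm μ (fun x => g x - h x) :=
  calc l2norm μ (fun x => f x - h x) = l2norm μ ((f - g) + (g - h)) := by
        congr 1; funext x; simp only [Pi.add_apply, Pi.sub_apply, sub_add_sub_cancel]
    _ ≤ _ := l2norm_add_le (hf.sub hg) (hg.sub hh)

end L2Norm

lemma le_add_mul_iSup_of_le {ι : Type*} [Finite ι] {a b c : ℝ} {f : ι → ℝ} (hc : 0 ≤ c) (i : ι)
    (h : a ≤ b + c * f i) : a ≤ b + c * ⨆ i, f i :=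
  h.trans (by gcongr; exact Finite.le_ciSup f i)

theorem error_recursion_general
    {α L : Type*} [MeasurableSpace α] [Fintype L]
    (J : ℕ) (ν : ℕ → Measure α)
    (Chat Ctil Cstar : ℕ → L → α → ℝ)
    (Ψ : ℕ → Set (α → ℝ))
    (ε : ℕ → ℝ)
    (hL2Chat : ∀ j z, MemLp (Chat j z) 2 (ν j))
    (hL2Ctil : ∀ j z, MemLp (Ctil j z) 2 (ν j))
    (hL2Cstar : ∀ j z, MemLp (Cstar j z) 2 (ν j))
    (hproj : ∀ j, j < J → ∀ z : L,
      l2norm (ν j) (fun x => Chat j z x - Ctil j z x) ≤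
        ε j + Real.sqrt 2 *
          sInf ((fun w => l2norm (ν j) (fun x => Ctil j z x - w x)) '' Ψ j))
    (hprop : ∀ j, j + 1 ≤ J →
      l2norm (ν j) (fun x => ⨆ z : L, |Ctil j z x - Cstar j z x|) ≤
        errSeq J ν Chat Cstar (j + 1)) :
    ∀ j, j < J →
      errSeq J ν Chat Cstar j ≤
        (Fintype.card L : ℝ) * (ε j + Real.sqrt 2 *
            ⨆ z : L, sInf ((fun w => l2norm (ν j) (fun x => Ctil j z x - w x)) '' Ψ j)) +
          (Fintype.card L : ℝ) * errSeq J ν Chat Cstar (j + 1) := by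
  intro j hj
  set S := ⨆ z : L, sInf ((fun w => l2norm (ν j) (fun x => Ctil j z x - w x)) '' Ψ j)
  have hproj_sup (z : L) : l2norm (ν j) (fun x => Chat j z x - Ctil j z x) ≤ ε j + √2 * S :=
    le_add_mul_iSup_of_le (Real.sqrt_nonneg 2) z (hproj j hj z)
  have hprop_z (z : L) : l2norm (ν j) (fun x => Ctil j z x - Cstar j z x) ≤
      errSeq J ν Chat Cstar (j + 1) :=
    (l2norm_le_l2norm_iSup_abs (f := fun z x => Ctil j z x - Cstar j z x)
      (fun z => (hL2Ctil j z).sub (hL2Cstar j z)) z).trans (hprop j hj)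
  have herr_z (z : L) : l2norm (ν j) (fun x => Chat j z x - Cstar j z x) ≤
      ε j + √2 * S + errSeq J ν Chat Cstar (j + 1) :=
    (l2norm_sub_le_add (hL2Chat j z) (hL2Ctil j z) (hL2Cstar j z)).trans
      (add_le_add (hproj_sup z) (hprop_z z))
  calc errSeq J ν Chat Cstar j = l2norm (ν j) (fun x => ⨆ z, |Chat j z x - Cstar j z x|) :=
        if_pos hj
    _ ≤ ∑ z, l2norm (ν j) (fun x => Chat j z x - Cstar j z x) :=
        l2norm_iSup_abs_le_sum (f := fun z x => Chat j z x - Cstar j z x)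
          fun z => (hL2Chat j z).sub (hL2Cstar j z)
    _ ≤ Fintype.card L • (ε j + √2 * S + errSeq J ν Chat Cstar (j + 1)) :=
        Finset.sum_le_card_nsmul _ _ _ fun z _ => herr_z z
    _ = _ := by rw [nsmul_eq_mul]; ring

/-- **Error recursion** (Proposition): assume the empirical projection bound
`‖Ĉ_j(z,·) − C̃_j(z,·)‖ ≤ ε_{j,M} + √2·inf_{w∈Ψ_j} ‖C̃_j(z,·) − w‖` for each `z`, and the
one-step propagation inequality `‖sup_z |C̃_j − C*_j|‖ ≤ E_{j+1}`.  Then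
`E_j ≤ |L|·(ε_{j,M} + √2·sup_z inf_{w∈Ψ_j} ‖C̃_j(z,·) − w‖) + |L|·E_{j+1}` for `j < J`
(with `E_J = 0`). -/
theorem error_recursion
    {α L : Type*} [MeasurableSpace α] [Fintype L] [Nonempty L]
    (J : ℕ) (ν : ℕ → Measure α)
    (Chat Ctil Cstar : ℕ → L → α → ℝ)
    (Ψ : ℕ → Set (α → ℝ)) (hΨ : ∀ j, (Ψ j).Nonempty)
    (ε : ℕ → ℝ)
    (hmChat : ∀ j z, Measurable (Chat j z))
    (hmCtil : ∀ j z, Measurable (Ctil j z))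
    (hmCstar : ∀ j z, Measurable (Cstar j z))
    (hL2Chat : ∀ j z, MemLp (Chat j z) 2 (ν j))
    (hL2Ctil : ∀ j z, MemLp (Ctil j z) 2 (ν j))
    (hL2Cstar : ∀ j z, MemLp (Cstar j z) 2 (ν j))
    (hproj : ∀ j, j < J → ∀ z : L,
      l2norm (ν j) (fun x => Chat j z x - Ctil j z x) ≤
        ε j + Real.sqrt 2 *
          sInf ((fun w => l2norm (ν j) (fun x => Ctil j z x - w x)) '' Ψ j))
    (hprop : ∀ j, j + 1 ≤ J →
      l2norm (ν j) (fun x => ⨆ z : L, |Ctil j z x - Cstar j z x|) ≤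
        errSeq J ν Chat Cstar (j + 1)) :
    ∀ j, j < J →
      errSeq J ν Chat Cstar j ≤
        (Fintype.card L : ℝ) * (ε j + Real.sqrt 2 *
            ⨆ z : L, sInf ((fun w => l2norm (ν j) (fun x => Ctil j z x - w x)) '' Ψ j)) +
          (Fintype.card L : ℝ) * errSeq J ν Chat Cstar (j + 1) :=
  error_recursion_general J ν Chat Ctil Cstar Ψ ε hL2Chat hL2Ctil hL2Cstar hproj hprop
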